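/- Let $\mathcal{G}=(G^{[1]},\dots,G^{[N]})$ be a finite time-evolving weighted graph on a common node set, with global temporal transition matrix $M$ (for some fixed backtracking regime) and global weight matrix $Z=\mathrm{diag}(Z^{[1]},\dots,Z^{[N]})$. Then for every integer $k\geq 1$, the $(e,f)$ entry of $\sqrt{Z}\,M^k\,\sqrt{Z}$ equals the weighted count of all permitted temporal walks of length $k+1$ starting with edge $e$ and ending with edge $f$, where the weight of a walk is the product of the weights of its traversed edges. -/
import Mathlib


open Matrix

open scoped Classical in
/-- The weighted sum over all permitted temporal walks consisting of `ℓ + 1`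
consecutive edges, starting with edge `e` and ending with edge `f`; the weight of a
walk is the product of the weights of its traversed edges. -/
noncomputable def temporalWalkSum {n m N : ℕ} (src tgt : Fin m → Fin n)
    (time : Fin m → Fin N) (w : Fin m → ℝ)
    (permitted : Fin m → Fin m → Prop) (ℓ : ℕ) (e f : Fin m) : ℝ :=
  ∑ es ∈ Finset.univ.filter (fun es : Fin (ℓ + 1) → Fin m =>
      es 0 = e ∧ es (Fin.last ℓ) = f ∧
      ∀ t : Fin ℓ, permitted (es t.castSucc) (es t.succ)),
    ∏ t, w (es t)

open scoped Classical in
lemma tws_zero {n m N : ℕ} (src tgt : Fin m → Fin n) (time : Fin m → Fin N)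
    (w : Fin m → ℝ) (permitted : Fin m → Fin m → Prop) (e f : Fin m) :
    temporalWalkSum src tgt time w permitted 0 e f = if e = f then w e else 0 := by
  classical
  unfold temporalWalkSum
  rw [Finset.sum_filter, ← Equiv.sum_comp (Equiv.funUnique (Fin 1) (Fin m)).symm]
  simp only [Equiv.funUnique_symm_apply, Fin.prod_univ_one]
  have hlast : (Fin.last 0) = (0 : Fin 1) := rfl
  by_cases h : e = f
  · subst h
    simp [hlast]
  · rw [if_neg h]
    apply Finset.sum_eq_zero
    intro x _
    rw [if_neg]
    rintro ⟨h1, h2, -⟩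
    exact h (h1 ▸ h2 ▸ rfl)

open scoped Classical in
lemma tws_succ {n m N : ℕ} (src tgt : Fin m → Fin n) (time : Fin m → Fin N)
    (w : Fin m → ℝ) (permitted : Fin m → Fin m → Prop) (ℓ : ℕ) (e f : Fin m) :
    temporalWalkSum src tgt time w permitted (ℓ + 1) e f =
      ∑ g, temporalWalkSum src tgt time w permitted ℓ e g *
        (if permitted g f then w f else 0) := by
  classical
  unfold temporalWalkSum
  simp only [Finset.sum_filter, Finset.sum_mul]
  rw [← Equiv.sum_comp (Fin.snocEquiv (fun _ => Fin m))]
  conv_lhs => rw [Fintype.sum_prod_type, Finset.sum_comm]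
  conv_rhs => rw [Finset.sum_comm]
  apply Finset.sum_congr rfl
  intro front _
  -- LHS: ∑ x, ite (cond (snoc front x)) (∏ w (snoc front x))
  -- RHS: ∑ g, (∑-free) ite (...) (∏ w front) * ite (permitted g f) (w f) 0
  have hsnoc : ∀ x : Fin m, (Fin.snocEquiv (fun _ => Fin m) (x, front)) = Fin.snoc front x := by
    intro x; rfl
  simp only [hsnoc]
  have h0 : ∀ x : Fin m, (Fin.snoc front x : Fin (ℓ + 2) → Fin m) 0 = front 0 := by
    intro x
    have : (0 : Fin (ℓ + 2)) = (0 : Fin (ℓ + 1)).castSucc := rfl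
    rw [this, Fin.snoc_castSucc]
  have hprod : ∀ x : Fin m, (∏ t, w ((Fin.snoc front x : Fin (ℓ + 2) → Fin m) t)) = (∏ t, w (front t)) * w x := by
    intro x
    rw [← Fin.prod_snoc (w x) (fun t => w (front t))]
    apply Finset.prod_congr rfl
    intro t _
    refine Fin.lastCases ?_ ?_ t
    · simp [Fin.snoc_last]
    · intro i; simp [Fin.snoc_castSucc]
  have hcond : ∀ x : Fin m,
      (∀ t : Fin (ℓ + 1), permitted ((Fin.snoc front x : Fin (ℓ + 2) → Fin m) t.castSucc) ((Fin.snoc front x : Fin (ℓ + 2) → Fin m) t.succ)) ↔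
        ((∀ t : Fin ℓ, permitted (front t.castSucc) (front t.succ)) ∧
          permitted (front (Fin.last ℓ)) x) := by
    intro x
    rw [Fin.forall_fin_succ']
    constructor
    · rintro ⟨h1, h2⟩
      constructor
      · intro t
        have := h1 t
        rwa [Fin.snoc_castSucc, Fin.succ_castSucc, Fin.snoc_castSucc] at this
      · rwa [Fin.snoc_castSucc, Fin.succ_last, Fin.snoc_last] at h2
    · rintro ⟨h1, h2⟩
      refine ⟨fun t => ?_, ?_⟩
      · rw [Fin.snoc_castSucc, Fin.succ_castSucc, Fin.snoc_castSucc]; exact h1 t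
      · rw [Fin.snoc_castSucc, Fin.succ_last, Fin.snoc_last]; exact h2
  -- collapse LHS (sum over x; condition forces x = f) and RHS (sum over g; forces g = front last)
  rw [Finset.sum_eq_single f ?_ (by simp), Finset.sum_eq_single (front (Fin.last ℓ)) ?_ (by simp)]
  · rw [h0, hprod, Fin.snoc_last]
    by_cases h1 : front 0 = e
    · by_cases h2 : ∀ t : Fin ℓ, permitted (front t.castSucc) (front t.succ)
      · by_cases h3 : permitted (front (Fin.last ℓ)) f
        · rw [if_pos ⟨h1, rfl, (hcond f).mpr ⟨h2, h3⟩⟩, if_pos ⟨h1, rfl, h2⟩, if_pos h3]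
        · rw [if_neg, if_pos ⟨h1, rfl, h2⟩, if_neg h3, mul_zero]
          rintro ⟨-, -, hc⟩
          exact h3 ((hcond f).mp hc).2
      · rw [if_neg, if_neg, zero_mul]
        · rintro ⟨-, -, hc⟩; exact h2 hc
        · rintro ⟨-, -, hc⟩; exact h2 ((hcond f).mp hc).1
    · rw [if_neg (fun hc => h1 hc.1), if_neg (fun hc => h1 hc.1), zero_mul]
  · intro g _ hg
    rw [if_neg, zero_mul]
    rintro ⟨-, hc, -⟩
    exact hg hc.symm
  · intro x _ hx
    rw [if_neg]
    rintro ⟨-, hc, -⟩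
    exact hx (by rwa [Fin.snoc_last] at hc)

open scoped Classical in
/-- for a finite time-evolving weighted graph with global temporal
transition matrix `M` (for some fixed backtracking regime, so that
`M e f = √(w_e w_f)` when `ef` is a permitted walk of length two and `0` otherwise)
and global weight matrix `Z`, for every `k ≥ 1` the `(e,f)` entry of `√Z M^k √Z`
equals the weighted count of all permitted temporal walks of length `k + 1` starting
with edge `e` and ending with edge `f`. -/
theorem stmt18 {n m N : ℕ} (src tgt : Fin m → Fin n) (time : Fin m → Fin N)
    (w : Fin m → ℝ) (hw : ∀ e, 0 < w e)
    (permitted : Fin m → Fin m → Prop)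
    (hperm : ∀ e f, permitted e f → tgt e = src f ∧ time e ≤ time f)
    (M : Matrix (Fin m) (Fin m) ℝ)
    (hM : ∀ e f, M e f = if permitted e f then Real.sqrt (w e * w f) else 0) :
    ∀ k : ℕ, 1 ≤ k → ∀ e f : Fin m,
      (Matrix.diagonal (fun e => Real.sqrt (w e)) * M ^ k *
        Matrix.diagonal (fun e => Real.sqrt (w e))) e f =
        temporalWalkSum src tgt time w permitted k e f := by
  have key : ∀ k : ℕ, ∀ e f : Fin m,
      Real.sqrt (w e) * (M ^ k) e f * Real.sqrt (w f) =
        temporalWalkSum src tgt time w permitted k e f := by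
    intro k
    induction k with
    | zero =>
      intro e f
      rw [tws_zero, pow_zero]
      by_cases h : e = f
      · subst h
        simp [Matrix.one_apply_eq, Real.mul_self_sqrt (hw e).le, mul_comm]
      · simp [Matrix.one_apply_ne h, h]
    | succ k ih =>
      intro e f
      rw [tws_succ, pow_succ, Matrix.mul_apply, Finset.mul_sum, Finset.sum_mul]
      apply Finset.sum_congr rfl
      intro g _
      rw [← ih e g, hM g f]
      by_cases h : permitted g f
      · rw [if_pos h, if_pos h, Real.sqrt_mul (hw g).le]
        have hss : Real.sqrt (w f) * Real.sqrt (w f) = w f :=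
          Real.mul_self_sqrt (hw f).le
        calc Real.sqrt (w e) * ((M ^ k) e g * (Real.sqrt (w g) * Real.sqrt (w f))) *
              Real.sqrt (w f)
            = Real.sqrt (w e) * (M ^ k) e g * Real.sqrt (w g) *
              (Real.sqrt (w f) * Real.sqrt (w f)) := by ring
          _ = Real.sqrt (w e) * (M ^ k) e g * Real.sqrt (w g) * w f := by rw [hss]
      · rw [if_neg h, if_neg h]; ring
  intro k _ e f
  rw [Matrix.mul_diagonal, Matrix.diagonal_mul]
  exact key k e f
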